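/- Every graded algebra isomorphism f : H(k,n) → H(l,n) satisfies f(t_n) = ± t_n. -/

import Mathlib

open MvPolynomial

/- The graded ring H(k,n) = ℤ[t₁,…,t_n]/(t₁⁴+kt₁³t₂, …, t_{n-1}⁴+kt_{n-1}³t_n, t_n⁴)
with |t_i| = 2.  We index the `n` variables t₁,…,t_n of the paper by `Fin n`;
a homogeneous element of topological degree `2*j` is (the class of) a polynomial
that is homogeneous of polynomial degree `j`. -/

/-- The ideal (t₁⁴+kt₁³t₂, …, t_{n-1}⁴+k t_{n-1}³t_n, t_n⁴), with the `n`
variables indexed by `Fin (n+1)` for `n+1` variables... -/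
noncomputable def Hideal (k n : ℕ) : Ideal (MvPolynomial (Fin (n + 1)) ℤ) :=
  Ideal.span ({X (Fin.last n) ^ 4} ∪
    Set.range fun i : Fin n =>
      X (Fin.castSucc i) ^ 4 + (k : ℤ) • (X (Fin.castSucc i) ^ 3 * X i.succ))

/-- The ring `H(k, n+1 vars)`: `H k n` has `n+1` variables `t₀,…,t_n`,
so it is the ring H(k, n+1) of the paper. -/
noncomputable abbrev HRing (k n : ℕ) : Type :=
  MvPolynomial (Fin (n + 1)) ℤ ⧸ Hideal k n

/-- The generator t_i of H(k,n). -/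
noncomputable def Ht (k n : ℕ) (i : Fin (n + 1)) : HRing k n :=
  Ideal.Quotient.mk _ (X i)

/-- A ring homomorphism `HRing k n → HRing l n` preserves the grading (all
gradings in sight are concentrated in even topological degrees `2*j`) if it
sends classes of homogeneous polynomials of degree `j` to classes of
homogeneous polynomials of degree `j`, for every `j`. -/
def PreservesGrading {k l n : ℕ} (f : HRing k n →+* HRing l n) : Prop :=
  ∀ (j : ℕ) (x : MvPolynomial (Fin (n + 1)) ℤ), x.IsHomogeneous j →
    ∃ y : MvPolynomial (Fin (n + 1)) ℤ, y.IsHomogeneous j ∧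
      f (Ideal.Quotient.mk _ x) = Ideal.Quotient.mk _ y

/-- A graded (ring/algebra) isomorphism H(k,n) ≅ H(l,n): a ring isomorphism
preserving the grading in both directions.  (Every ring homomorphism between
these rings is automatically a ℤ-algebra homomorphism.) -/
def IsGradedIso {k l n : ℕ} (f : HRing k n ≃+* HRing l n) : Prop :=
  PreservesGrading (f : HRing k n →+* HRing l n) ∧
    PreservesGrading (f.symm : HRing l n →+* HRing k n)

/-!
A degree-two class `x = ∑ cⱼ tⱼ` with `x⁴ = 0` is an integer multiple of `t_n`. Indeed, for
`i < n` the evaluation `tᵢ ↦ u`, `tᵢ₊₁ ↦ v`, `tⱼ ↦ 0` otherwise maps the relations into the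
ideal `(u⁴ + k u³v, v⁴)` of `ℤ[u,v]`, and comparing the coefficients of `u⁴`, `u³v`, `u²v²` in
`(cᵢu + cᵢ₊₁v)⁴` forces `cᵢ = 0`. So a graded isomorphism and its inverse send `t_n` to `c t_n`
and `d t_n`; as all relations have degree four, the multiples of `t_n` are pairwise distinct,
whence `dc = 1`.
-/

namespace Polynomial

theorem eq_zero_of_linear_pow_four_mem_span {R : Type*} [CommRing R] [IsDomain R] [CharZero R]
    {k a b : R} (hk : k ≠ 0)
    (h : (a • C X + b • X : R[X][X]) ^ 4 ∈ Ideal.span {C X ^ 4 + k • (C X ^ 3 * X), X ^ 4}) :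
    a = 0 := by
  obtain ⟨p, q, hpq⟩ := Ideal.mem_span_pair.1 h
  have hexp : (a • C X + b • X : R[X][X]) ^ 4 =
      C (C (a ^ 4) * X ^ 4) + C (C (4 * a ^ 3 * b) * X ^ 3) * X ^ 1 +
        C (C (6 * a ^ 2 * b ^ 2) * X ^ 2) * X ^ 2 + C (C (4 * a * b ^ 3) * X) * X ^ 3 +
        C (C (b ^ 4)) * X ^ 4 := by
    simp only [Algebra.smul_def, algebraMap_apply, algebraMap_eq, map_mul, map_pow, map_ofNat]
    ring
  have hgen : (C X ^ 4 + k • (C X ^ 3 * X) : R[X][X]) =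
      C (X ^ 4) + C (C k * X ^ 3) * X ^ 1 := by
    simp only [Algebra.smul_def, algebraMap_apply, algebraMap_eq, map_mul, map_pow]
    ring
  rw [hexp, hgen] at hpq
  -- `u = C X` and `v = X`
  have hcoeff (i j : ℕ) := congrArg (fun P : R[X][X] => (P.coeff i).coeff j) hpq
  have hu4 := hcoeff 0 4
  have hu3v := hcoeff 1 3
  have hu2v2 := hcoeff 2 2
  simp only [mul_add, ← mul_assoc, coeff_add, coeff_mul_C, coeff_mul_X_pow', coeff_C,
    ↓reduceIte, Nat.reduceEqDiff, Nat.reduceLeDiff, Nat.reduceSub, add_zero, zero_add]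
    at hu4 hu3v hu2v2
  have hab : a * b = 0 := by
    have : (6 : R) * (a * b) ^ 2 = 0 := by rw [hu2v2]; ring
    simpa using this
  have hp : (p.coeff 0).coeff 0 = 0 := by
    have : (p.coeff 0).coeff 0 * k = 0 := by rw [hu3v]; linear_combination 4 * a ^ 2 * hab
    simpa [hk] using this
  exact pow_eq_zero_iff (n := 4) (by norm_num) |>.1 (hu4 ▸ hp)

end Polynomial

namespace Hideal

variable {k n : ℕ}

theorem le_comap_aeval {S : Type*} [CommRing S] (φ : Fin (n + 1) → S) (J : Ideal S)
    (hlast : φ (Fin.last n) ^ 4 ∈ J)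
    (hrel : ∀ i : Fin n, φ i.castSucc ^ 4 + (k : ℤ) • (φ i.castSucc ^ 3 * φ i.succ) ∈ J) :
    Hideal k n ≤ J.comap (aeval φ) := by
  refine Ideal.span_le.2 ?_
  rintro _ (rfl | ⟨i, rfl⟩)
  · simpa using hlast
  · simpa using hrel i

theorem X_last_pow_four_mem : X (Fin.last n) ^ 4 ∈ Hideal k n :=
  Ideal.subset_span (Or.inl rfl)

theorem eq_zero_of_zsmul_X_last_mem {e : ℤ} (h : e • X (Fin.last n) ∈ Hideal k n) :
    e = 0 := by
  have hle := le_comap_aeval (k := k) (Pi.single (Fin.last n) (Polynomial.X : Polynomial ℤ))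
    (Ideal.span {Polynomial.X ^ 4}) (by simp)
    (fun i => by simp [(Fin.castSucc_lt_last i).ne])
  have hdvd := Ideal.mem_span_singleton.1 (hle h)
  rw [Polynomial.X_pow_dvd_iff] at hdvd
  simpa using hdvd 1

noncomputable def pairEval (i : Fin n) : Fin (n + 1) → Polynomial (Polynomial ℤ) :=
  Pi.single i.castSucc (Polynomial.C Polynomial.X) + Pi.single i.succ Polynomial.X

theorem le_comap_aeval_pairEval (i : Fin n) :
    Hideal k n ≤ (Ideal.span {Polynomial.C Polynomial.X ^ 4 +
      (k : ℤ) • (Polynomial.C Polynomial.X ^ 3 * Polynomial.X), Polynomial.X ^ 4}).comap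
      (aeval (pairEval i)) := by
  have hne : i.castSucc ≠ i.succ := Fin.castSucc_lt_succ.ne
  have hu : pairEval i i.castSucc = Polynomial.C Polynomial.X := by simp [pairEval, hne]
  have hv : pairEval i i.succ = Polynomial.X := by simp [pairEval, hne.symm]
  have h0 (j : Fin (n + 1)) (h₁ : j ≠ i.castSucc) (h₂ : j ≠ i.succ) : pairEval i j = 0 := by
    simp [pairEval, h₁, h₂]
  refine le_comap_aeval _ _ ?_ fun j => ?_
  · by_cases hi : Fin.last n = i.succ
    · rw [hi, hv]
      exact Ideal.subset_span (by simp)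
    · simp [h0 _ (Fin.castSucc_lt_last i).ne' hi]
  by_cases hji : j = i
  · subst hji
    rw [hu, hv]
    exact Ideal.subset_span (by simp)
  by_cases hj : j.castSucc = i.succ
  · have hlt : i.succ < j.succ := hj ▸ Fin.castSucc_lt_succ
    rw [hj, hv, h0 _ (Fin.castSucc_lt_succ.trans hlt).ne' hlt.ne', mul_zero, smul_zero, add_zero]
    exact Ideal.subset_span (by simp)
  · simp [h0 _ (fun h => hji (Fin.castSucc_injective _ h)) hj]

theorem coeff_castSucc_eq_zero_of_pow_four_mem (hk : k ≠ 0) (c : Fin (n + 1) → ℤ)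
    (h : (∑ j, c j • X j) ^ 4 ∈ Hideal k n) (i : Fin n) : c i.castSucc = 0 := by
  have hmem := le_comap_aeval_pairEval i h
  have hsum : ∑ j, c j • pairEval i j =
      c i.castSucc • Polynomial.C Polynomial.X + c i.succ • Polynomial.X := by
    simp [pairEval, Pi.single_apply, Finset.sum_add_distrib, smul_add, smul_ite]
  simp only [Ideal.mem_comap, map_pow, map_sum, map_zsmul, aeval_X, hsum] at hmem
  exact Polynomial.eq_zero_of_linear_pow_four_mem_span (k := (k : ℤ)) (by exact_mod_cast hk) hmem

end Hideal

theorem Ht_last_pow_four (k n : ℕ) : Ht k n (Fin.last n) ^ 4 = 0 := by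
  rw [Ht, ← map_pow, Ideal.Quotient.eq_zero_iff_mem]
  exact Hideal.X_last_pow_four_mem

theorem zsmul_Ht_last_injective (k n : ℕ) :
    Function.Injective fun c : ℤ => c • Ht k n (Fin.last n) := by
  intro c d h
  have hcd : (c - d) • Ht k n (Fin.last n) = 0 := by simpa [sub_smul, sub_eq_zero] using h
  rw [Ht, ← map_zsmul, Ideal.Quotient.eq_zero_iff_mem] at hcd
  exact sub_eq_zero.1 (Hideal.eq_zero_of_zsmul_X_last_mem hcd)

theorem exists_mk_eq_zsmul_Ht_last {k n : ℕ} (hk : k ≠ 0) {y : MvPolynomial (Fin (n + 1)) ℤ}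
    (hy : y.IsHomogeneous 1) (h4 : Ideal.Quotient.mk (Hideal k n) y ^ 4 = 0) :
    ∃ c : ℤ, Ideal.Quotient.mk (Hideal k n) y = c • Ht k n (Fin.last n) := by
  obtain ⟨c, rfl⟩ : ∃ c : Fin (n + 1) → ℤ, ∑ j, c j • X j = y := by
    rw [← mem_homogeneousSubmodule, homogeneousSubmodule_one_eq_span_X] at hy
    exact (Submodule.mem_span_range_iff_exists_fun ℤ).1 hy
  rw [← map_pow, Ideal.Quotient.eq_zero_iff_mem] at h4
  refine ⟨c (Fin.last n), ?_⟩
  rw [Fin.sum_univ_castSucc, Finset.sum_eq_zero fun i _ => by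
    rw [Hideal.coeff_castSucc_eq_zero_of_pow_four_mem hk c h4 i, zero_smul], zero_add,
    map_zsmul, Ht]

theorem PreservesGrading.exists_map_Ht_last_eq_zsmul {k l n : ℕ} {f : HRing k n →+* HRing l n}
    (hf : PreservesGrading f) (hl : l ≠ 0) :
    ∃ c : ℤ, f (Ht k n (Fin.last n)) = c • Ht l n (Fin.last n) := by
  obtain ⟨y, hy, hfy⟩ := hf 1 (X (Fin.last n)) (isHomogeneous_X ℤ _)
  rw [Ht, hfy]
  refine exists_mk_eq_zsmul_Ht_last hl hy ?_
  rw [← hfy, ← map_pow, ← Ht, Ht_last_pow_four, map_zero]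

theorem stmt12 (k l n : ℕ) (hk : 0 < k) (hl : 0 < l)
    (f : HRing k n ≃+* HRing l n) (hf : IsGradedIso f) :
    f (Ht k n (Fin.last n)) = Ht l n (Fin.last n) ∨
      f (Ht k n (Fin.last n)) = -Ht l n (Fin.last n) := by
  obtain ⟨c, hc⟩ := hf.1.exists_map_Ht_last_eq_zsmul hl.ne'
  obtain ⟨d, hd⟩ := hf.2.exists_map_Ht_last_eq_zsmul hk.ne'
  simp only [RingEquiv.coe_toRingHom] at hc hd
  have hdc : (d * c) • Ht l n (Fin.last n) = (1 : ℤ) • Ht l n (Fin.last n) :=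
    calc (d * c) • Ht l n (Fin.last n) = d • f (Ht k n (Fin.last n)) := by rw [hc, mul_smul]
      _ = f (f.symm (Ht l n (Fin.last n))) := by rw [hd, map_zsmul]
      _ = (1 : ℤ) • Ht l n (Fin.last n) := by rw [f.apply_symm_apply, one_smul]
  rcases Int.eq_one_or_neg_one_of_mul_eq_one' (zsmul_Ht_last_injective l n hdc) with
    ⟨-, rfl⟩ | ⟨-, rfl⟩
  · exact Or.inl (by simpa using hc)
  · exact Or.inr (by simpa using hc)
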